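/- Let r ≥ 2 and k ≥ 2 be integers. The number of tuples (i_1, i_2, …, i_k) with each i_j ∈ {1,…,r} satisfying i_1 > i_2 ≤ i_3 ≤ … ≤ i_k equals M(r,k) = (k-1) · binomial(k + r - 2, k). -/

import Mathlib

/-!
Deleting the first entry identifies the tuples with pairs `(a, w)`, where `w` is a weakly
increasing `(k-1)`-tuple and `a > w₁`. The pairs with `a ≤ w₁` are exactly the weakly increasing
`k`-tuples, and weakly increasing `n`-tuples in an `r`-element chain are sorted multisets, counted
by `C(r+n-1, n)`. So the count is `r·C(r+k-2, k-1) - C(r+k-1, k) = (k-1)·C(k+r-2, k)`.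
-/

section Preorder

variable {α : Type*} [Preorder α]

theorem Fin.monotone_iff_le_and_monotone_tail {n : ℕ} (v : Fin (n + 2) → α) :
    Monotone v ↔ v 0 ≤ v 1 ∧ Monotone (Fin.tail v) := by
  simp only [Fin.monotone_iff_le_succ (f := v), Fin.monotone_iff_le_succ (f := Fin.tail v),
    Fin.forall_fin_succ, Fin.tail, Fin.succ_castSucc]
  rfl

theorem Fin.monotone_tail_iff {n : ℕ} (v : Fin (n + 1) → α) :
    Monotone (Fin.tail v) ↔ ∀ j l : Fin (n + 1), 1 ≤ (j : ℕ) → j ≤ l → v j ≤ v l := by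
  refine ⟨fun h j l hj hjl => ?_,
    fun h i j hij => h i.succ j.succ (by simp) (Fin.succ_le_succ_iff.mpr hij)⟩
  cases j using Fin.cases with
  | zero => simp at hj
  | succ j =>
    cases l using Fin.cases with
    | zero => simp at hjl
    | succ l => exact h (Fin.succ_le_succ_iff.mp hjl)

end Preorder

section LinearOrder

variable {α : Type*} [LinearOrder α]

variable (α) in
def Fin.monotoneEquivSym (n : ℕ) : {f : Fin n → α // Monotone f} ≃ Sym α n where
  toFun f := ⟨List.ofFn f.1, by simp⟩
  invFun s := ⟨fun i => ((s : Multiset α).sort (· ≤ ·))[i]'(by simp),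
    fun i j hij => (Multiset.pairwise_sort _ _).sortedLE
      (show (⟨i, by simp⟩ : Fin _) ≤ ⟨j, by simp⟩ from hij)⟩
  left_inv f := by
    have hsort : (↑(List.ofFn f.1) : Multiset α).sort (· ≤ ·) = List.ofFn f.1 := by
      rw [Multiset.coe_sort]
      exact List.mergeSort_eq_self _ (List.sortedLE_iff_pairwise.mp f.2.sortedLE_ofFn)
    ext i
    simp [hsort]
  right_inv s := by
    have hofFn : List.ofFn (fun i : Fin n => ((s : Multiset α).sort (· ≤ ·))[i]'(by simp)) =
        (s : Multiset α).sort (· ≤ ·) := List.ext_getElem (by simp) (by simp)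
    exact Sym.ext (by simp only [hofFn, Multiset.sort_eq]; rfl)

theorem Fin.card_monotone [Fintype α] (n : ℕ) :
    Nat.card {f : Fin n → α // Monotone f} = (Fintype.card α + n - 1).choose n := by
  classical
  rw [Nat.card_congr (Fin.monotoneEquivSym α n), Nat.card_eq_fintype_card,
    Sym.card_sym_eq_choose]

variable (α) in
def Fin.tailMonotoneEquiv (n : ℕ) :
    {v : Fin (n + 1) → α // Monotone (Fin.tail v)} ≃ α × {w : Fin n → α // Monotone w} where
  toFun v := (v.1 0, ⟨Fin.tail v.1, v.2⟩)
  invFun p := ⟨Fin.cons p.1 p.2.1, by simpa using p.2.2⟩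
  left_inv v := by simp
  right_inv p := by simp

theorem Fin.card_monotone_tail_lt_add_card_monotone [Fintype α] (n : ℕ) :
    Nat.card {v : Fin (n + 2) → α // Monotone (Fin.tail v) ∧ v 1 < v 0} +
        Nat.card {v : Fin (n + 2) → α // Monotone v} =
      Fintype.card α * Nat.card {w : Fin (n + 1) → α // Monotone w} := by
  classical
  have hdescent : Nat.card {v : {v : Fin (n + 2) → α // Monotone (Fin.tail v)} // v.1 1 < v.1 0} =
      Nat.card {v : Fin (n + 2) → α // Monotone (Fin.tail v) ∧ v 1 < v 0} :=
    Nat.card_congr (Equiv.subtypeSubtypeEquivSubtypeInter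
      (fun v : Fin (n + 2) → α => Monotone (Fin.tail v)) (fun v => v 1 < v 0))
  have hascent : Nat.card {v : {v : Fin (n + 2) → α // Monotone (Fin.tail v)} // ¬ v.1 1 < v.1 0} =
      Nat.card {v : Fin (n + 2) → α // Monotone v} :=
    Nat.card_congr ((Equiv.subtypeSubtypeEquivSubtypeInter
      (fun v : Fin (n + 2) → α => Monotone (Fin.tail v))
      (fun v => ¬ v 1 < v 0)).trans (Equiv.subtypeEquivRight fun v => by
        rw [Fin.monotone_iff_le_and_monotone_tail, not_lt, and_comm]))
  rw [← hdescent, ← hascent, ← Nat.card_sum, Nat.card_congr (Equiv.sumCompl _),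
    Nat.card_congr (Fin.tailMonotoneEquiv α (n + 1)), Nat.card_prod, Nat.card_eq_fintype_card]

end LinearOrder

theorem Nat.card_subtype_forall_mem_and {ι β : Type*} (s : Finset β) (P : (ι → β) → Prop) :
    Nat.card {v : ι → β // (∀ i, v i ∈ s) ∧ P v} = Nat.card {w : ι → s // P (fun i => w i)} :=
  Nat.card_congr ((Equiv.subtypeSubtypeEquivSubtypeInter _ _).symm.trans
    (Equiv.subtypeEquiv Equiv.subtypePiEquivPi fun _ => Iff.rfl))

theorem Nat.mul_choose_eq_mul_choose_add_choose (a n : ℕ) :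
    a * (a + n).choose (n + 1) =
      (n + 1) * (a + n).choose (n + 2) + (a + n + 1).choose (n + 2) := by
  cases a with
  | zero => simp [Nat.choose_eq_zero_of_lt]
  | succ b =>
    have hpascal : (b + 1 + n + 1).choose (n + 2) =
        (b + 1 + n).choose (n + 1) + (b + 1 + n).choose (n + 2) :=
      Nat.choose_succ_succ' (b + 1 + n) (n + 1)
    have hratio : (b + 1 + n).choose (n + 2) * (n + 2) = (b + 1 + n).choose (n + 1) * b := by
      have h := Nat.choose_succ_right_eq (b + 1 + n) (n + 1)
      rwa [show b + 1 + n - (n + 1) = b by omega] at h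
    rw [hpascal]
    linear_combination -hratio

/-- For `r ≥ 2` and `k ≥ 2`, the number of tuples
`(i_1, …, i_k)` with every `i_j ∈ {1,…,r}`, `i_1 > i_2` and `i_2 ≤ i_3 ≤ … ≤ i_k`
equals `M(r,k) = (k-1) * C(k+r-2, k)`. -/
theorem card_chen_basis_degree_k (r k : ℕ) (hk : 2 ≤ k) :
    Nat.card
      {v : Fin k → ℕ //
        (∀ j, v j ∈ Finset.Icc 1 r) ∧
        v ⟨1, by omega⟩ < v ⟨0, by omega⟩ ∧
        (∀ j l : Fin k, 1 ≤ (j : ℕ) → j ≤ l → v j ≤ v l)} =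
      (k - 1) * Nat.choose (k + r - 2) k := by
  obtain ⟨m, rfl⟩ : ∃ m, k = m + 2 := ⟨k - 2, by omega⟩
  have hpred : ∀ w : Fin (m + 2) → Finset.Icc 1 r,
      ((w 1 : ℕ) < w 0 ∧ ∀ j l : Fin (m + 2), 1 ≤ (j : ℕ) → j ≤ l → (w j : ℕ) ≤ w l) ↔
        Monotone (Fin.tail w) ∧ w 1 < w 0 := fun w => by
    simp only [Subtype.coe_lt_coe, Subtype.coe_le_coe, Fin.monotone_tail_iff, and_comm]
  rw [(Nat.card_subtype_forall_mem_and _ _).trans (Nat.card_congr (Equiv.subtypeEquivRight hpred))]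
  have hcount := Fin.card_monotone_tail_lt_add_card_monotone (α := Finset.Icc 1 r) m
  simp only [Fin.card_monotone, Fintype.card_coe, Nat.card_Icc, Nat.add_sub_cancel] at hcount
  rw [show r + (m + 2) - 1 = r + m + 1 by omega, show r + (m + 1) - 1 = r + m by omega] at hcount
  rw [show m + 2 - 1 = m + 1 from rfl, show m + 2 + r - 2 = r + m by omega]
  have hident := Nat.mul_choose_eq_mul_choose_add_choose r m
  omega
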